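/- On the 4-dimensional solvable (oscillator) Lie algebra g = ℝ⁴ with the standard orthonormal metric, the function P(X) = ½(x₁² + x₂² + 2x₀x₃) is invariant under the transadjoint action: its gradient ∇P(X) = x₃e₀ + x₁e₁ + x₂e₂ + x₀e₃ satisfies ad^t_{∇P(X)} X = 0 for all X ∈ ℝ⁴. -/

import Mathlib

/-- The transadjoint action `ad^t_X Y` on the 4-dimensional solvable (oscillator)
Lie algebra with brackets `[e₃,e₁]=e₂`, `[e₃,e₂]=-e₁`, `[e₁,e₂]=e₀`, with respect to
the standard orthonormal metric on `ℝ⁴` (coordinates indexed `0,…,3` for `e₀,…,e₃`). -/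
def adt4 (X Y : Fin 4 → ℝ) : Fin 4 → ℝ :=
  ![0,
    X 3 * Y 2 - X 2 * Y 0,
    X 1 * Y 0 - X 3 * Y 1,
    X 2 * Y 1 - X 1 * Y 2]

/-- `P(X) = ½(x₁² + x₂² + 2x₀x₃)`. -/
noncomputable def Posc (X : Fin 4 → ℝ) : ℝ :=
  (X 1 ^ 2 + X 2 ^ 2 + 2 * X 0 * X 3) / 2

/-- `∇P(X) = x₃e₀ + x₁e₁ + x₂e₂ + x₀e₃`. -/
def gradPosc (X : Fin 4 → ℝ) : Fin 4 → ℝ := ![X 3, X 1, X 2, X 0]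

/-- `gradPosc` is the gradient of `P` with respect to the standard inner product, and
`P` is invariant under the transadjoint action: `ad^t_{∇P(X)} X = 0` for all `X`. -/
theorem stmt_18 : ∀ X : Fin 4 → ℝ,
    (∀ Y : Fin 4 → ℝ, ∑ i, gradPosc X i * Y i = fderiv ℝ Posc X Y) ∧
    adt4 (gradPosc X) X = 0 := by
  intro X
  constructor
  · intro Y
    have f : ∀ i : Fin 4, HasFDerivAt (fun Z : Fin 4 → ℝ => Z i)
        (ContinuousLinearMap.proj (R := ℝ) (φ := fun _ => ℝ) i) X :=
      fun i => hasFDerivAt_apply i X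
    have hbig := ((((f 1).mul (f 1)).add ((f 2).mul (f 2))).add
        (((f 0).const_mul 2).mul (f 3))).const_mul (1/2 : ℝ)
    have hP : Posc = fun x : Fin 4 → ℝ =>
        (1/2 : ℝ) * (x 1 * x 1 + x 2 * x 2 + 2 * x 0 * x 3) := by
      funext x; simp [Posc]; ring
    rw [hP, (show fderiv ℝ (fun x : Fin 4 → ℝ =>
        (1/2 : ℝ) * (x 1 * x 1 + x 2 * x 2 + 2 * x 0 * x 3)) X = _ from hbig.fderiv)]
    simp [gradPosc, Fin.sum_univ_four, ContinuousLinearMap.proj_apply]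
    ring
  · funext i
    fin_cases i <;> simp [adt4, gradPosc] <;> ring
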